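/- arXiv:2312.11267 — 4 statements merged into one kernel-verified Lean document; each statement's English description precedes it below -/
import Mathlib

section
/- If M_n(y) is positive semidefinite and y = ∑_{J ⊆ X} α_J χ^J is the expansion of y in the basis of characteristic vectors, then each coefficient α_J is nonnegative; indeed α_J = (ψ^J)^T M_n(y) ψ^J where ψ^J is the dual basis vector. -/
/-!
Since `K ∪ K' ⊆ J` iff `K ⊆ J` and `K' ⊆ J`, the moment matrix of `χ^J` is the rank-one matrix
`χ^J (χ^J)ᵀ`, so by linearity `M(y) = ∑ α_J χ^J (χ^J)ᵀ`. Möbius inversion on the Boolean lattice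
gives `⟨ψ^J, χ^{J'}⟩ = δ_{J,J'}`, hence `(ψ^J)ᵀ M(y) ψ^J = α_J`, which is nonnegative when
`M(y)` is positive semidefinite.
-/

open Finset Matrix

section

variable {X R : Type*} [Fintype X] [DecidableEq X]

/-- The characteristic vector `χ^J`. -/
def subsetIndicator (R : Type*) [Zero R] [One R] (J : Finset X) : Finset X → R :=
  fun K => if K ⊆ J then 1 else 0

/-- The dual vector `ψ^J`. -/
def moebiusDual (R : Type*) [Ring R] (J : Finset X) : Finset X → R :=
  fun K => if J ⊆ K then (-1) ^ #(K \ J) else 0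

def momentMatrix (y : Finset X → R) : Matrix (Finset X) (Finset X) R :=
  Matrix.of fun K K' => y (K ∪ K')

omit [Fintype X] in
theorem sum_Icc_neg_one_pow_card_sdiff [Ring R] (J J₀ : Finset X) :
    ∑ K ∈ Icc J J₀, (-1 : R) ^ #(K \ J) = if J = J₀ then 1 else 0 := by
  by_cases h : J ⊆ J₀
  · have hdisj : ∀ T ∈ (J₀ \ J).powerset, Disjoint J T := fun T hT =>
      disjoint_of_subset_right (mem_powerset.1 hT) disjoint_sdiff
    have hsum := congrArg (Int.cast : ℤ → R) (sum_powerset_neg_one_pow_card (x := J₀ \ J))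
    push_cast at hsum
    rw [Icc_eq_image_powerset h, sum_image, sum_congr rfl fun T hT => by
      rw [union_sdiff_cancel_left (hdisj T hT)], hsum]
    · simp only [sdiff_eq_empty_iff_subset, subset_antisymm_iff (a := J), h, true_and]
    · intro T hT T' hT' hTT'
      dsimp only at hTT'
      rw [← union_sdiff_cancel_left (hdisj T hT), hTT', union_sdiff_cancel_left (hdisj T' hT')]
  · rw [Icc_eq_empty fun h' => h h', sum_empty, if_neg fun h' => h h'.le]

theorem moebiusDual_dotProduct_subsetIndicator [Ring R] (J J₀ : Finset X) :
    moebiusDual R J ⬝ᵥ subsetIndicator R J₀ = if J = J₀ then 1 else 0 := by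
  rw [← sum_Icc_neg_one_pow_card_sdiff, dotProduct]
  simp only [moebiusDual, subsetIndicator, mul_ite, mul_one, mul_zero, ← sum_filter]
  congr 1
  ext K
  simp only [mem_filter, mem_univ, true_and, and_comm, mem_Icc]

omit [Fintype X] in
theorem subsetIndicator_union [MulZeroOneClass R] (J K K' : Finset X) :
    subsetIndicator R J (K ∪ K') = subsetIndicator R J K * subsetIndicator R J K' := by
  simp only [subsetIndicator, union_subset_iff, ite_zero_mul_ite_zero, mul_one]

theorem momentMatrix_sum_smul_subsetIndicator [CommSemiring R] (α : Finset X → R) :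
    momentMatrix (∑ J, α J • subsetIndicator R J) =
      ∑ J, α J • vecMulVec (subsetIndicator R J) (subsetIndicator R J) := by
  ext K K'
  simp only [momentMatrix, of_apply, Finset.sum_apply, Pi.smul_apply, smul_eq_mul,
    subsetIndicator_union, Matrix.sum_apply, smul_of, vecMulVec]

theorem moebiusDual_dotProduct_momentMatrix_mulVec [CommRing R] (α : Finset X → R)
    (J : Finset X) :
    moebiusDual R J ⬝ᵥ (momentMatrix (∑ K, α K • subsetIndicator R K) *ᵥ moebiusDual R J) =
      α J := by
  simp only [momentMatrix_sum_smul_subsetIndicator, sum_mulVec, smul_mulVec, dotProduct_sum,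
    dotProduct_smul, vecMulVec_mulVec, op_smul_eq_smul, dotProduct_comm (subsetIndicator R _),
    moebiusDual_dotProduct_subsetIndicator, smul_eq_mul, ← ite_and, and_self, mul_ite, mul_one,
    mul_zero, Fintype.sum_ite_eq]

end

/-- if M_n(y) ⪰ 0 then the coefficients in the χ-expansion of y are
nonnegative, indeed α_J = (ψ^J)^T M_n(y) ψ^J where ψ^J is the dual basis vector. -/
theorem expansion_coefficients_nonneg {X : Type*} [Fintype X] [DecidableEq X]
    (y : Finset X → ℝ)
    (hpsd : (Matrix.of fun J J' : Finset X => y (J ∪ J')).PosSemidef)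
    (α : Finset X → ℝ)
    (hexp : y = ∑ J : Finset X, α J • (fun J' : Finset X => if J' ⊆ J then (1 : ℝ) else 0)) :
    ∀ J : Finset X,
      (α J = ∑ J' : Finset X, ∑ J'' : Finset X,
          (if J ⊆ J' then (-1 : ℝ) ^ (J' \ J).card else 0) * y (J' ∪ J'') *
            (if J ⊆ J'' then (-1 : ℝ) ^ (J'' \ J).card else 0)) ∧
        0 ≤ α J := by
  intro J
  have hα : α J = moebiusDual ℝ J ⬝ᵥ (momentMatrix y *ᵥ moebiusDual ℝ J) := by
    rw [hexp]
    exact (moebiusDual_dotProduct_momentMatrix_mulVec α J).symm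
  refine ⟨?_, ?_⟩
  · rw [hα]
    simp only [dotProduct, mulVec, momentMatrix, of_apply, moebiusDual, Finset.mul_sum, mul_assoc]
  · rw [hα]
    exact hpsd.dotProduct_mulVec_nonneg _
end

section
/- Let X be a finite set, J ⊆ X, and y = χ^J. For vectors a ∈ ℝ^X and b ∈ ℝ with ∑_{i ∈ J} a_i ≥ b, the localizing matrix M^a_b(y) with entries [M^a_b(y)]_{J',J''} = ∑_{i ∈ X} a_i · y(J' ∪ J'' ∪ {i}) − b · y(J' ∪ J'') equals (∑_{i ∈ J} a_i − b) · χ^J (χ^J)^T, and is therefore positive semidefinite. -/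
open Finset Matrix

namespace LocalizingMatrix

variable {X R : Type*} [DecidableEq X]

/-- The paper's `χ^J`. -/
def chi [Zero R] [One R] (J : Finset X) (S : Finset X) : R := if S ⊆ J then 1 else 0

/-- The paper's `M^a_b(y)`, for the constraint `a^T x ≥ b`. -/
def localizingMatrix [CommRing R] [Fintype X] (y : Finset X → R) (a : X → R) (b : R) :
    Matrix (Finset X) (Finset X) R :=
  of fun J' J'' => (∑ i, a i * y (J' ∪ J'' ∪ {i})) - b * y (J' ∪ J'')

theorem chi_union [MulZeroOneClass R] (J s t : Finset X) : (chi J (s ∪ t) : R) = chi J s * chi J t := by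
  simp only [chi, union_subset_iff, ite_zero_mul_ite_zero, mul_one]

theorem chi_singleton [Zero R] [One R] (J : Finset X) (i : X) : (chi J {i} : R) = if i ∈ J then 1 else 0 := by
  simp only [chi, singleton_subset_iff]

theorem localizingMatrix_chi [CommRing R] [Fintype X] (J : Finset X) (a : X → R) (b : R) :
    localizingMatrix (chi J) a b = ((∑ i ∈ J, a i) - b) • vecMulVec (chi J) (chi J) := by
  ext J' J''
  have hsum : ∑ i, a i * chi J (J' ∪ J'' ∪ {i}) = (∑ i ∈ J, a i) * chi J (J' ∪ J'') := by
    simp only [chi_union J (J' ∪ J''), chi_singleton, mul_ite, mul_one,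
      mul_zero, sum_ite_mem, univ_inter, sum_mul]
  rw [localizingMatrix, of_apply, hsum]
  simp only [chi_union, Matrix.smul_apply, vecMulVec_apply, smul_eq_mul]
  ring

end LocalizingMatrix

open LocalizingMatrix in
/-- for y = χ^J with ∑_{i∈J} a_i ≥ b, the localizing matrix equals
(∑_{i∈J} a_i − b) χ^J (χ^J)^T and is positive semidefinite. -/
theorem localizing_matrix_of_chi {X : Type*} [Fintype X] [DecidableEq X]
    (J : Finset X) (a : X → ℝ) (b : ℝ) (hab : b ≤ ∑ i ∈ J, a i) :
    (Matrix.of fun J' J'' : Finset X =>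
        (∑ i : X, a i * (if J' ∪ J'' ∪ {i} ⊆ J then (1 : ℝ) else 0)) -
          b * (if J' ∪ J'' ⊆ J then (1 : ℝ) else 0)) =
        ((∑ i ∈ J, a i) - b) •
          Matrix.vecMulVec (fun J' : Finset X => if J' ⊆ J then (1 : ℝ) else 0)
            (fun J' : Finset X => if J' ⊆ J then (1 : ℝ) else 0) ∧
      (Matrix.of fun J' J'' : Finset X =>
        (∑ i : X, a i * (if J' ∪ J'' ∪ {i} ⊆ J then (1 : ℝ) else 0)) -
          b * (if J' ∪ J'' ⊆ J then (1 : ℝ) else 0)).PosSemidef := by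
  change localizingMatrix (chi J) a b = _ ∧ (localizingMatrix (chi J) a b).PosSemidef
  rw [localizingMatrix_chi]
  refine ⟨rfl, ?_⟩
  have hpsd := posSemidef_vecMulVec_self_star (chi J : Finset X → ℝ)
  rw [star_trivial] at hpsd
  exact hpsd.smul (sub_nonneg.mpr hab)
end

section
/- For a 0/1 integer linear program ILP = min{c^T x : x ∈ {0,1}^n, Ax ≥ b}, the (n+1)-st step of the Lasserre hierarchy equals ILP: any y : 𝒫([n]) → ℝ with y(∅) = 1, M_n(y) ⪰ 0, and M^j_n(y) ⪰ 0 for all rows j, satisfies ∑_i c_i y({i}) ≥ ILP, and the minimum over such y equals ILP. -/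
/-!
Every `y : Finset α → ℝ` is the zeta transform `y S = ∑_{T ⊇ S} μ T` of its Möbius transform `μ`.
In these coordinates `M(y) = ∑_T μ T · v_T v_Tᵀ`, with `v_T` the indicator of the subsets of `T`,
and the localizing vector `S ↦ ∑ᵢ aᵢ y(S ∪ {i}) - β y S` is the zeta transform of
`T ↦ (∑_{i ∈ T} aᵢ - β) μ T`. So the Lasserre constraints say exactly that `μ` is a probability
distribution on subsets of `[n]` supported on feasible ones, and `∑ᵢ cᵢ y{i} = ∑_T μ T ∑_{i ∈ T} cᵢ`
is an average of feasible values, hence at least `ILP`; the point mass at an optimal solution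
attains it.
-/

open Finset Matrix

namespace Lasserre

variable {α : Type*} [DecidableEq α]

theorem sum_Iic_mu_right (K T : Finset α) :
    ∑ J ∈ Iic T, IncidenceAlgebra.mu ℝ K J = if K = T then 1 else 0 := by
  rw [← IncidenceAlgebra.sum_Icc_mu_right]
  refine (sum_subset Icc_subset_Iic_self fun J hJT hJ => ?_).symm
  exact IncidenceAlgebra.apply_eq_zero_of_not_le
    (fun hKJ => hJ (mem_Icc.2 ⟨hKJ, mem_Iic.1 hJT⟩)) _

variable [Fintype α]

def zetaTransform (μ : Finset α → ℝ) (S : Finset α) : ℝ := ∑ T ∈ Ici S, μ T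

def momentMatrix (y : Finset α → ℝ) : Matrix (Finset α) (Finset α) ℝ :=
  Matrix.of fun J J' => y (J ∪ J')

theorem sum_Ici_eq_sum_ite (f : Finset α → ℝ) (S : Finset α) :
    ∑ T ∈ Ici S, f T = ∑ T, (if S ⊆ T then 1 else 0) * f T := by
  simp only [ite_mul, one_mul, zero_mul, ← sum_filter]
  exact congrArg (∑ T ∈ ·, f T) filter_le_eq_Ici.symm

theorem sum_Iic_eq_sum_ite (f : Finset α → ℝ) (S : Finset α) :
    ∑ T ∈ Iic S, f T = ∑ T, (if T ⊆ S then 1 else 0) * f T := by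
  simp only [ite_mul, one_mul, zero_mul, ← sum_filter]
  exact congrArg (∑ T ∈ ·, f T) filter_ge_eq_Iic.symm

theorem dotProduct_momentMatrix_zetaTransform_mulVec (μ u : Finset α → ℝ) :
    u ⬝ᵥ (momentMatrix (zetaTransform μ) *ᵥ u) = ∑ T, μ T * (∑ J ∈ Iic T, u J) ^ 2 := by
  simp only [dotProduct, mulVec, momentMatrix, of_apply, zetaTransform,
    sum_Ici_eq_sum_ite, sum_Iic_eq_sum_ite, union_subset_iff, ite_and, sq, mul_sum, sum_mul]
  conv_rhs => rw [sum_comm]; enter [2, J]; rw [sum_comm]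
  refine sum_congr rfl fun J _ => sum_congr rfl fun J' _ => sum_congr rfl fun T _ => ?_
  split_ifs <;> ring

/-- The Möbius function `J ↦ mu K J` is the dual basis of the vectors `(1_{J ⊆ T})_J`, so it
extracts `μ K` from the quadratic form. -/
theorem posSemidef_momentMatrix_zetaTransform_iff {μ : Finset α → ℝ} :
    (momentMatrix (zetaTransform μ)).PosSemidef ↔ ∀ T, 0 ≤ μ T := by
  constructor
  · intro h K
    have hK := h.dotProduct_mulVec_nonneg (IncidenceAlgebra.mu ℝ K)
    rw [star_trivial, dotProduct_momentMatrix_zetaTransform_mulVec] at hK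
    simpa [sum_Iic_mu_right] using hK
  · intro hμ
    refine .of_dotProduct_mulVec_nonneg ?_ fun u => ?_
    · ext J J'
      simp [momentMatrix, union_comm]
    · rw [star_trivial, dotProduct_momentMatrix_zetaTransform_mulVec]
      exact sum_nonneg fun T _ => mul_nonneg (hμ T) (sq_nonneg _)

noncomputable def moebiusTransform (y : Finset α → ℝ) (S : Finset α) : ℝ :=
  ∑ T ∈ Ici S, IncidenceAlgebra.mu ℝ S T * y T

theorem zetaTransform_moebiusTransform (y : Finset α → ℝ) :
    zetaTransform (moebiusTransform y) = y := by
  ext S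
  calc zetaTransform (moebiusTransform y) S
      = ∑ U ∈ Ici S, (∑ T ∈ Icc S U, IncidenceAlgebra.mu ℝ T U) * y U := by
        simp only [zetaTransform, moebiusTransform, sum_mul]
        refine sum_comm' fun T U => ?_
        simp only [mem_Ici, mem_Icc]
        exact ⟨fun h => ⟨⟨h.1, h.2⟩, h.1.trans h.2⟩, fun h => ⟨h.1.1, h.1.2⟩⟩
    _ = y S := by simp [IncidenceAlgebra.sum_Icc_mu_left]

theorem zetaTransform_empty (μ : Finset α → ℝ) : zetaTransform μ ∅ = ∑ T, μ T := by
  simp [zetaTransform, sum_Ici_eq_sum_ite]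

def localizingVector (a : α → ℝ) (β : ℝ) (y : Finset α → ℝ) (S : Finset α) : ℝ :=
  ∑ i, a i * y (S ∪ {i}) - β * y S

theorem sum_mul_zetaTransform_union_singleton (a : α → ℝ) (μ : Finset α → ℝ) (S : Finset α) :
    ∑ i, a i * zetaTransform μ (S ∪ {i}) = zetaTransform (fun T => (∑ i ∈ T, a i) * μ T) S := by
  have hIci : ∀ i, Ici (S ∪ {i}) = (Ici S).filter (i ∈ ·) := fun i => by
    ext T
    simp [insert_subset_iff, and_comm]
  simp only [zetaTransform, hIci, sum_filter, mul_sum, sum_mul]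
  rw [sum_comm]
  refine sum_congr rfl fun T _ => ?_
  simp [mul_ite, sum_ite_mem]

theorem sum_mul_zetaTransform_singleton (a : α → ℝ) (μ : Finset α → ℝ) :
    ∑ i, a i * zetaTransform μ {i} = ∑ T, μ T * ∑ i ∈ T, a i := by
  simpa [zetaTransform_empty, mul_comm] using sum_mul_zetaTransform_union_singleton a μ ∅

theorem localizingVector_zetaTransform (a : α → ℝ) (β : ℝ) (μ : Finset α → ℝ) :
    localizingVector a β (zetaTransform μ) =
      zetaTransform (fun T => (∑ i ∈ T, a i - β) * μ T) := by
  ext S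
  rw [localizingVector, sum_mul_zetaTransform_union_singleton]
  simp only [zetaTransform, mul_sum, ← sum_sub_distrib, sub_mul]

def IsLasserreFeasible {ι : Type*} (A : Matrix ι α ℝ) (b : ι → ℝ) (y : Finset α → ℝ) : Prop :=
  y ∅ = 1 ∧ (momentMatrix y).PosSemidef ∧
    ∀ j, (momentMatrix (localizingVector (A j) (b j) y)).PosSemidef

theorem isLasserreFeasible_zetaTransform_iff {ι : Type*} (A : Matrix ι α ℝ) (b : ι → ℝ)
    (μ : Finset α → ℝ) :
    IsLasserreFeasible A b (zetaTransform μ) ↔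
      ∑ T, μ T = 1 ∧ ∀ T, 0 ≤ μ T ∧ (0 < μ T → ∀ j, b j ≤ ∑ i ∈ T, A j i) := by
  simp only [IsLasserreFeasible, zetaTransform_empty, localizingVector_zetaTransform,
    posSemidef_momentMatrix_zetaTransform_iff]
  refine and_congr_right fun _ => ⟨fun ⟨hμ, hloc⟩ T => ⟨hμ T, fun hT j => ?_⟩, fun h => ?_⟩
  · exact sub_nonneg.1 (nonneg_of_mul_nonneg_left (hloc j T) hT)
  · refine ⟨fun T => (h T).1, fun j T => ?_⟩
    rcases (h T).1.eq_or_lt with hT | hT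
    · simp [← hT]
    · exact mul_nonneg (sub_nonneg.2 ((h T).2 hT j)) hT.le

theorem setOf_binary_feasible_eq {ι : Type*} (A : Matrix ι α ℝ) (b : ι → ℝ) (c : α → ℝ) :
    {v : ℝ | ∃ x : α → ℝ, (∀ i, x i = 0 ∨ x i = 1) ∧
      (∀ j, b j ≤ ∑ i, A j i * x i) ∧ v = ∑ i, c i * x i} =
    {v : ℝ | ∃ K : Finset α, (∀ j, b j ≤ ∑ i ∈ K, A j i) ∧ v = ∑ i ∈ K, c i} := by
  ext v
  constructor
  · rintro ⟨x, hx, hA, rfl⟩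
    have hsum : ∀ w : α → ℝ, ∑ i, w i * x i = ∑ i ∈ univ.filter (x · = 1), w i := fun w => by
      rw [sum_filter]
      exact sum_congr rfl fun i _ => by rcases hx i with h | h <;> simp [h]
    exact ⟨_, fun j => (hA j).trans_eq (hsum (A j)), hsum c⟩
  · rintro ⟨K, hA, rfl⟩
    refine ⟨fun i => if i ∈ K then 1 else 0, fun i => by by_cases h : i ∈ K <;> simp [h],
      fun j => by simpa using hA j, by simp⟩

theorem le_sum_mul_of_sum_eq_one {ι : Type*} {s : Finset ι} {μ f : ι → ℝ} {L : ℝ}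
    (hμ : ∀ i ∈ s, 0 ≤ μ i) (hμ1 : ∑ i ∈ s, μ i = 1) (hf : ∀ i ∈ s, 0 < μ i → L ≤ f i) :
    L ≤ ∑ i ∈ s, μ i * f i :=
  calc L = ∑ i ∈ s, μ i * L := by rw [← sum_mul, hμ1, one_mul]
    _ ≤ ∑ i ∈ s, μ i * f i := sum_le_sum fun i hi => by
      rcases (hμ i hi).eq_or_lt with h | h
      · simp [← h]
      · exact mul_le_mul_of_nonneg_left (hf i hi h) h.le

end Lasserre

open Lasserre

/-- the (n+1)-st step of the Lasserre hierarchy equals the 0/1 ILP value. -/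
theorem lasserre_final_step_equals_ilp (m n : ℕ)
    (A : Matrix (Fin m) (Fin n) ℝ) (b : Fin m → ℝ) (c : Fin n → ℝ) (ILP : ℝ)
    (hILP : IsLeast {v : ℝ | ∃ x : Fin n → ℝ, (∀ i, x i = 0 ∨ x i = 1) ∧
        (∀ j, b j ≤ ∑ i, A j i * x i) ∧ v = ∑ i, c i * x i} ILP) :
    IsLeast {v : ℝ | ∃ y : Finset (Fin n) → ℝ, y ∅ = 1 ∧
        (Matrix.of fun J J' : Finset (Fin n) => y (J ∪ J')).PosSemidef ∧
        (∀ j : Fin m, (Matrix.of fun J J' : Finset (Fin n) =>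
            (∑ i, A j i * y (J ∪ J' ∪ {i})) - b j * y (J ∪ J')).PosSemidef) ∧
        v = ∑ i, c i * y {i}} ILP := by
  rw [setOf_binary_feasible_eq] at hILP
  constructor
  · obtain ⟨K, hK, rfl⟩ := hILP.1
    have hfeas : IsLasserreFeasible A b (zetaTransform (Pi.single K 1)) := by
      refine (isLasserreFeasible_zetaTransform_iff A b _).2 ⟨by simp, fun T => ?_⟩
      by_cases hT : T = K
      · subst hT
        simpa using hK
      · simp [hT]
    refine ⟨_, hfeas.1, hfeas.2.1, hfeas.2.2, ?_⟩
    simp [sum_mul_zetaTransform_singleton, Pi.single_apply]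
  · rintro v ⟨y, hy0, hM, hloc, rfl⟩
    have hfeas : IsLasserreFeasible A b y := ⟨hy0, hM, hloc⟩
    rw [← zetaTransform_moebiusTransform y, isLasserreFeasible_zetaTransform_iff] at hfeas
    rw [← zetaTransform_moebiusTransform y, sum_mul_zetaTransform_singleton]
    exact le_sum_mul_of_sum_eq_one (fun T _ => (hfeas.2 T).1) hfeas.1
      fun T _ hT => hILP.2 ⟨T, (hfeas.2 T).2 hT, rfl⟩
end

section
/- If y : 𝒫([n]) → ℝ satisfies y(∅) = 1, M_n(y) ⪰ 0, and all localizing matrices M^j_n(y) ⪰ 0 (j = 1, …, m), and α_J > 0 in the expansion y = ∑_J α_J χ^J, then the 0/1 point x^J defined by x^J_i = χ^J({i}) satisfies A x^J ≥ b. -/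
/-!
Because `χ^K(S ∪ S' ∪ {i}) = χ^K(S) χ^K(S') [i ∈ K]`, the expansion `y = ∑ α_K χ^K` turns the
localizing matrix `M^j_n(y)` into the combination `∑_K α_K (A_j x^K - b_j) χ^K (χ^K)ᵀ` of rank-one
matrices. The Möbius function `μ(J, ·)` of the Boolean lattice is the dual basis to the `χ^K`
(`μ * ζ = 1` in the incidence algebra), so evaluating the quadratic form of `M^j_n(y) ⪰ 0` at it
isolates `0 ≤ α_J (A_j x^J - b_j)`.
-/

open Finset Matrix IncidenceAlgebra

namespace Matrix

variable {ι κ R : Type*} [Fintype ι] [Fintype κ] [CommSemiring R]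

theorem dotProduct_sum_smul_vecMulVec_mulVec (c : κ → R) (v : κ → ι → R) (z : ι → R) :
    z ⬝ᵥ (∑ k, c k • vecMulVec (v k) (v k)) *ᵥ z = ∑ k, c k * (z ⬝ᵥ v k) ^ 2 := by
  simp only [sum_mulVec, dotProduct_sum, smul_mulVec, vecMulVec_mulVec, dotProduct_smul]
  refine Finset.sum_congr rfl fun k _ => ?_
  simp [dotProduct_comm (v k) z, smul_eq_mul, sq]

end Matrix

namespace IncidenceAlgebra

variable {𝕜 α : Type*} [PartialOrder α] [LocallyFiniteOrder α] [Fintype α]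
  [DecidableEq α] [DecidableLE α]

theorem mu_dotProduct_zeta [Ring 𝕜] (a b : α) :
    (mu 𝕜 a ·) ⬝ᵥ (zeta 𝕜 · b) = if a = b then 1 else 0 := by
  rw [← one_apply, ← mu_mul_zeta, mul_apply]
  refine (Finset.sum_subset (subset_univ _) fun x _ hx => ?_).symm
  dsimp only
  by_cases hax : a ≤ x
  · rw [apply_eq_zero_of_not_le (fun hxb => hx (mem_Icc.2 ⟨hax, hxb⟩)), mul_zero]
  · rw [apply_eq_zero_of_not_le hax, zero_mul]

theorem mu_dotProduct_sum_smul_vecMulVec_zeta_mulVec_mu [CommRing 𝕜] (c : α → 𝕜) (a : α) :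
    (mu 𝕜 a ·) ⬝ᵥ (∑ k, c k • vecMulVec (zeta 𝕜 · k) (zeta 𝕜 · k)) *ᵥ (mu 𝕜 a ·) = c a := by
  rw [dotProduct_sum_smul_vecMulVec_mulVec, Fintype.sum_eq_single a fun k hk => by
    rw [mu_dotProduct_zeta, if_neg hk.symm, zero_pow two_ne_zero, mul_zero]]
  rw [mu_dotProduct_zeta, if_pos rfl, one_pow, mul_one]

theorem nonneg_of_posSemidef_sum_smul_vecMulVec_zeta {c : α → ℝ}
    (h : (∑ k, c k • vecMulVec (zeta ℝ · k) (zeta ℝ · k)).PosSemidef) (a : α) : 0 ≤ c a := by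
  simpa only [star_trivial, mu_dotProduct_sum_smul_vecMulVec_zeta_mulVec_mu] using
    h.dotProduct_mulVec_nonneg (mu ℝ a ·)

end IncidenceAlgebra

section Localizing

variable {ι R : Type*} [Fintype ι] [DecidableEq ι] [CommRing R]

def localizingMatrix (a : ι → R) (β : R) (y : Finset ι → R) : Matrix (Finset ι) (Finset ι) R :=
  Matrix.of fun S S' => ∑ i, a i * y (S ∪ S' ∪ {i}) - β * y (S ∪ S')

theorem localizingMatrix_eq_sum_smul_vecMulVec_zeta (a : ι → R) (β : R) (c : Finset ι → R)
    {y : Finset ι → R} (hy : y = ∑ K, c K • fun S => if S ⊆ K then (1 : R) else 0) :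
    localizingMatrix a β y =
      ∑ K, (c K * (∑ i, a i * (if i ∈ K then 1 else 0) - β)) •
        vecMulVec (zeta R · K) (zeta R · K) := by
  ext S S'
  simp only [localizingMatrix, hy, of_apply, Finset.sum_apply, Matrix.sum_apply, Pi.smul_apply,
    Matrix.smul_apply, smul_eq_mul, vecMulVec_apply, zeta_apply, Finset.mul_sum]
  rw [Finset.sum_comm, ← Finset.sum_sub_distrib]
  refine Finset.sum_congr rfl fun K _ => ?_
  by_cases hS : S ⊆ K <;> by_cases hS' : S' ⊆ K <;>
    simp [hS, hS', union_subset_iff, insert_subset_iff, Finset.mul_sum, mul_sub, mul_comm]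

end Localizing

theorem support_points_feasible_general (m n : ℕ)
    (A : Matrix (Fin m) (Fin n) ℝ) (b : Fin m → ℝ)
    (y : Finset (Fin n) → ℝ)
    (hMj : ∀ j : Fin m, (Matrix.of fun J J' : Finset (Fin n) =>
        (∑ i, A j i * y (J ∪ J' ∪ {i})) - b j * y (J ∪ J')).PosSemidef)
    (α : Finset (Fin n) → ℝ)
    (hexp : y = ∑ J : Finset (Fin n), α J •
        (fun J' : Finset (Fin n) => if J' ⊆ J then (1 : ℝ) else 0))
    (J : Finset (Fin n)) (hJ : 0 < α J) :
    ∀ j : Fin m, b j ≤ ∑ i, A j i * (if i ∈ J then (1 : ℝ) else 0) := by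
  intro j
  have hloc : (localizingMatrix (A j) (b j) y).PosSemidef := hMj j
  rw [localizingMatrix_eq_sum_smul_vecMulVec_zeta (A j) (b j) α hexp] at hloc
  have hslack := nonneg_of_posSemidef_sum_smul_vecMulVec_zeta hloc J
  linarith [(mul_nonneg_iff_of_pos_left hJ).1 hslack]

/-- if y is feasible for the final Lasserre step and α_J > 0 in the
χ-expansion of y, then the 0/1 point x^J satisfies A x^J ≥ b. -/
theorem support_points_feasible (m n : ℕ)
    (A : Matrix (Fin m) (Fin n) ℝ) (b : Fin m → ℝ)
    (y : Finset (Fin n) → ℝ) (hy0 : y ∅ = 1)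
    (hM : (Matrix.of fun J J' : Finset (Fin n) => y (J ∪ J')).PosSemidef)
    (hMj : ∀ j : Fin m, (Matrix.of fun J J' : Finset (Fin n) =>
        (∑ i, A j i * y (J ∪ J' ∪ {i})) - b j * y (J ∪ J')).PosSemidef)
    (α : Finset (Fin n) → ℝ)
    (hexp : y = ∑ J : Finset (Fin n), α J •
        (fun J' : Finset (Fin n) => if J' ⊆ J then (1 : ℝ) else 0))
    (J : Finset (Fin n)) (hJ : 0 < α J) :
    ∀ j : Fin m, b j ≤ ∑ i, A j i * (if i ∈ J then (1 : ℝ) else 0) :=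
  support_points_feasible_general m n A b y hMj α hexp J hJ
end
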